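/- Let f(x,y) = sqrt((x+y−2)/(x+y)) − sqrt((x+y−2)/(x·y)). For every integer y ≥ 4, one has f(1,y) + f(y−1,y) > 0. -/
import Mathlib


noncomputable def f (x y : ℝ) : ℝ :=
  Real.sqrt ((x + y - 2) / (x + y)) - Real.sqrt ((x + y - 2) / (x * y))

theorem f1y_add_fym1y_pos (y : ℤ) (hy : 4 ≤ y) :
    f 1 y + f (y - 1) y > 0 := by
  have ht : (4 : ℝ) ≤ (y : ℝ) := by exact_mod_cast hy
  set t : ℝ := (y : ℝ) with htdef
  have h0 : (0:ℝ) < t := by linarith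
  have h1 : (0:ℝ) < t + 1 := by linarith
  have h2 : (0:ℝ) < t - 1 := by linarith
  have h3 : (0:ℝ) < 2*t - 1 := by linarith
  have h4 : (0:ℝ) < 2*t - 3 := by linarith
  have h5 : (0:ℝ) < (t-1)*t := by positivity
  set a : ℝ := (t-1)/(t+1) with ha
  set b : ℝ := (t-1)/t with hb
  set c : ℝ := (2*t-3)/(2*t-1) with hc
  set d : ℝ := (2*t-3)/((t-1)*t) with hd
  have hfa : f 1 t = Real.sqrt a - Real.sqrt b := by
    simp only [f, ha, hb]
    ring_nf
  have hfc : f (t-1) t = Real.sqrt c - Real.sqrt d := by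
    simp only [f, hc, hd]
    ring_nf
  have ha0 : 0 ≤ a := le_of_lt (div_pos h2 h1)
  have hb0 : 0 ≤ b := le_of_lt (div_pos h2 h0)
  have hc0 : 0 ≤ c := le_of_lt (div_pos h4 h3)
  have hd0 : 0 ≤ d := le_of_lt (div_pos h4 h5)
  -- key polynomial inequalities
  have hsum : b + d < a + c := by
    rw [hb, hd, ha, hc, div_add_div _ _ (ne_of_gt h0) (ne_of_gt h5),
      div_add_div _ _ (ne_of_gt h1) (ne_of_gt h3), div_lt_div_iff₀ (by positivity) (by positivity)]
    nlinarith [sq_nonneg t, sq_nonneg (t-4), mul_pos h0 h2, mul_pos (mul_pos h0 h2) h0]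
  have hprod : b * d < a * c := by
    rw [hb, hd, ha, hc, div_mul_div_comm, div_mul_div_comm,
      div_lt_div_iff₀ (by positivity) (by positivity)]
    have hcub : (t+1)*(2*t-1) < t*((t-1)*t) := by nlinarith [sq_nonneg t, mul_pos h0 h0]
    have := mul_lt_mul_of_pos_left hcub (mul_pos h2 h4)
    nlinarith [this]
  have hAC : Real.sqrt b * Real.sqrt d < Real.sqrt a * Real.sqrt c := by
    rw [← Real.sqrt_mul hb0, ← Real.sqrt_mul ha0]
    exact Real.sqrt_lt_sqrt (by positivity) hprod
  have hsq : (Real.sqrt b + Real.sqrt d)^2 < (Real.sqrt a + Real.sqrt c)^2 := by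
    have e1 : (Real.sqrt a + Real.sqrt c)^2 = a + c + 2*(Real.sqrt a * Real.sqrt c) := by
      rw [add_sq, Real.sq_sqrt ha0, Real.sq_sqrt hc0]; ring
    have e2 : (Real.sqrt b + Real.sqrt d)^2 = b + d + 2*(Real.sqrt b * Real.sqrt d) := by
      rw [add_sq, Real.sq_sqrt hb0, Real.sq_sqrt hd0]; ring
    rw [e1, e2]; linarith
  have hfin : Real.sqrt b + Real.sqrt d < Real.sqrt a + Real.sqrt c :=
    lt_of_pow_lt_pow_left₀ 2 (by positivity) hsq
  rw [hfa, hfc]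
  linarith
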